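/- arXiv:1803.03017 — 3 statements merged into one kernel-verified Lean document; each statement's English description precedes it below -/
import Mathlib

section
/- The set W̄ = W ⊎ W_l of group elements together with infinite reduced words of an arbitrary Coxeter system (W,S), partially ordered by the weak order (x ≤ y iff Φ_x ⊆ Φ_y), is a complete meet semilattice: every nonempty subset of W̄ admits a greatest lower bound in W̄. -/
/-!
Identify `w ∈ W` with its set of left inversions, the reflections `t` with `ℓ (t * w) < ℓ w`.
Tits' permutation representation of `W` on `W × ZMod 2` gives the strong exchange property: the
left inversions of `π ω` all occur in the left inversion sequence of `ω`. Hence inversion sets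
are additive along length-additive products, and `Φ_z ⊆ Φ_u` iff `ℓ z + ℓ (z⁻¹ * u) = ℓ u`.
Induction along left descents then shows that two elements of `W` with a common upper bound
have a join.

For a nonempty `A ⊆ W̄`, the finite lower bounds of `A` therefore form a directed family, and
the union `U` of their inversion sets is countable, being contained in `Φ_a` for any `a ∈ A`.
An increasing chain in the family exhausts `U`. If the lengths along the chain are bounded the
chain stabilises and `U` is an inversion set of an element of `W`; otherwise concatenating
reduced words for the successive quotients gives an infinite reduced expression with inversion
set `U`. In both cases that element of `W̄` is the greatest lower bound of `A`.
-/

namespace CoxInf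

variable {B : Type*} {W : Type*} [Group W] {M : CoxeterMatrix B}

/-- The inversion set `Φ_w` of `w⁻¹`, encoded via the canonical bijection between the
positive roots and the reflections: it corresponds to the set of left inversions of `w`. -/
def invSet (cs : CoxeterSystem M W) (w : W) : Set W :=
  {t | cs.IsLeftInversion w t}

/-- The length-`n` prefix of an infinite word in the generators. -/
def prefixWord (ω : ℕ → B) (n : ℕ) : List B := List.ofFn fun i : Fin n => ω i

/-- `ω` is an infinite reduced expression: every finite prefix is reduced. -/
def IsInfRedExpr (cs : CoxeterSystem M W) (ω : ℕ → B) : Prop :=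
  ∀ n, cs.IsReduced (prefixWord ω n)

/-- The elements of `W̄ = W ⊎ W_l`, represented as finite elements together with
infinite reduced expressions (an infinite reduced word is an equivalence class of
infinite reduced expressions having the same inversion set). -/
def barInv (cs : CoxeterSystem M W) : W ⊕ {ω : ℕ → B // IsInfRedExpr cs ω} → Set W
  | .inl w => invSet cs w
  | .inr ω => ⋃ n, invSet cs (cs.wordProd (prefixWord ω.1 n))

end CoxInf

theorem DirectedOn.exists_monotone_iUnion_eq {α β : Type*} {g : α → Set β} {F : Set α}
    (hF : F.Nonempty) (hdir : DirectedOn (fun x y ↦ g x ⊆ g y) F)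
    (hU : (⋃ x ∈ F, g x).Countable) :
    ∃ c : ℕ → α, (∀ k, c k ∈ F) ∧ Monotone (fun k ↦ g (c k)) ∧ ⋃ k, g (c k) = ⋃ x ∈ F, g x := by
  obtain ⟨x₀, hx₀⟩ := hF
  rcases (⋃ x ∈ F, g x).eq_empty_or_nonempty with hempty | hne
  · refine ⟨fun _ ↦ x₀, fun _ ↦ hx₀, monotone_const, ?_⟩
    rw [hempty, Set.iUnion_const]
    exact Set.subset_empty_iff.mp (hempty ▸ Set.subset_biUnion_of_mem hx₀)
  obtain ⟨f, hf⟩ := hU.exists_eq_range hne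
  have hstep : ∀ x ∈ F, ∀ k, ∃ z ∈ F, g x ⊆ g z ∧ f k ∈ g z := by
    intro x hx k
    obtain ⟨y, hy, hfy⟩ := Set.mem_iUnion₂.mp (hf ▸ Set.mem_range_self k)
    obtain ⟨z, hz, hxz, hyz⟩ := hdir x hx y hy
    exact ⟨z, hz, hxz, hyz hfy⟩
  choose! next hnextF hnext_sub hnext_mem using hstep
  let c : ℕ → α := fun k ↦ Nat.rec x₀ (fun k x ↦ next x k) k
  have hcF : ∀ k, c k ∈ F := fun k ↦ by
    induction k with
    | zero => exact hx₀
    | succ k ih => exact hnextF _ ih k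
  refine ⟨c, hcF, monotone_nat_of_le_succ fun k ↦ hnext_sub _ (hcF k) k,
    subset_antisymm (Set.iUnion_subset fun k ↦ Set.subset_biUnion_of_mem (hcF k)) ?_⟩
  rw [hf]
  rintro _ ⟨k, rfl⟩
  exact Set.mem_iUnion_of_mem (k + 1) (hnext_mem _ (hcF k) k)

namespace CoxeterSystem

open List

variable {B : Type*} {W : Type*} [Group W] {M : CoxeterMatrix B} (cs : CoxeterSystem M W)

local prefix:100 "s " => cs.simple
local prefix:100 "π " => cs.wordProd
local prefix:100 "lis " => cs.leftInvSeq

theorem prod_map_alternatingWord_two_mul {G : Type*} [Monoid G] (f : B → G) (i j : B) (m : ℕ) :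
    ((alternatingWord i j (2 * m)).map f).prod = (f i * f j) ^ m := by
  induction m with
  | zero => simp [alternatingWord]
  | succ m ih =>
    rw [show 2 * (m + 1) = 2 * m + 1 + 1 by ring, alternatingWord_succ', alternatingWord_succ']
    simp [ih, pow_succ', mul_assoc]

theorem getElem_leftInvSeq_alternatingWord_two_mul (i j : B) (p k : ℕ) (h : k < 2 * p) :
    (lis (alternatingWord i j (2 * p)))[k]'(by simp; lia) = s i * (s j * s i) ^ k := by
  rw [getElem_leftInvSeq_alternatingWord _ _ _ _ _ h, prod_alternatingWord_eq_mul_pow]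
  simp [Nat.add_div_of_dvd_right]

theorem leftInvSeq_alternatingWord_braid (i j : B) :
    lis (alternatingWord i j (2 * M i j)) =
      (range (M i j)).map (fun k ↦ s i * (s j * s i) ^ k) ++
        (range (M i j)).map (fun k ↦ s i * (s j * s i) ^ k) := by
  refine ext_getElem (by simp [two_mul]) fun k hk _ ↦ ?_
  rw [getElem_leftInvSeq_alternatingWord_two_mul _ _ _ _ _ (by simpa using hk)]
  by_cases hkM : k < M i j
  · simp [getElem_append_left, hkM]
  · obtain ⟨d, rfl⟩ := Nat.exists_eq_add_of_le (not_lt.mp hkM)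
    rw [getElem_append_right (by simp)]
    simp [pow_add, M.symmetric i j, simple_mul_simple_pow]

theorem leftInvSeq_append (ξ η : List B) :
    lis (ξ ++ η) = lis ξ ++ (lis η).map (MulAut.conj (π ξ)) := by
  induction ξ with
  | nil => simp
  | cons i ξ ih => simp [leftInvSeq, ih, wordProd_cons, Function.comp_def]

open Classical in
noncomputable def reflPerm (i : B) : Equiv.Perm (W × ZMod 2) :=
  Function.Involutive.toPerm (fun p ↦ (s i * p.1 * s i, p.2 + if p.1 = s i then 1 else 0)) <| by
    rintro ⟨x, e⟩
    have hconj : s i * (s i * x * s i) * s i = x := by simp [← mul_assoc]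
    have hfix : s i * x * s i = s i ↔ x = s i :=
      ⟨fun h ↦ by rw [← hconj, h]; simp, by rintro rfl; simp⟩
    by_cases hx : x = s i
    · simp [hx, add_assoc, CharTwo.add_self_eq_zero]
    · simp [hx, hconj, hfix]

open Classical in
theorem reflPerm_apply (i : B) (x : W) (e : ZMod 2) :
    cs.reflPerm i (x, e) = (s i * x * s i, e + if x = s i then 1 else 0) := rfl

open Classical in
theorem prod_map_reflPerm_apply (ω : List B) (x : W) (e : ZMod 2) :
    (ω.map cs.reflPerm).prod (x, e) =
      (π ω * x * (π ω)⁻¹, e + (lis ω).count (π ω * x * (π ω)⁻¹)) := by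
  induction ω generalizing x e with
  | nil => simp
  | cons i ω ih =>
    set y := π ω * x * (π ω)⁻¹
    have hy : π (i :: ω) * x * (π (i :: ω))⁻¹ = MulAut.conj (s i) y := by
      simp [y, wordProd_cons, mul_assoc]
    have hcount : (lis (i :: ω)).count (MulAut.conj (s i) y) =
        (lis ω).count y + if y = s i then 1 else 0 := by
      have hfix : s i = MulAut.conj (s i) y ↔ y = s i :=
        eq_comm.trans <| (MulAut.conj (s i)).injective.eq_iff' (by simp)
      rw [leftInvSeq, count_cons, count_map_of_injective _ _ (MulAut.conj (s i)).injective]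
      simp only [beq_iff_eq, hfix]
    rw [map_cons, prod_cons, Equiv.Perm.mul_apply, ih, reflPerm_apply, hy, hcount]
    simp [y, add_assoc]

theorem isLiftable_reflPerm : M.IsLiftable cs.reflPerm := by
  intro i j
  ext1 ⟨x, e⟩
  have hπ : π (alternatingWord i j (2 * M i j)) = 1 := by
    rw [wordProd, prod_map_alternatingWord_two_mul, simple_mul_simple_pow]
  classical
  rw [← prod_map_alternatingWord_two_mul, prod_map_reflPerm_apply, hπ,
    leftInvSeq_alternatingWord_braid, count_append]
  simp [← two_mul, show (2 : ZMod 2) = 0 from rfl]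

noncomputable def reflRep : W →* Equiv.Perm (W × ZMod 2) :=
  cs.lift ⟨cs.reflPerm, cs.isLiftable_reflPerm⟩

open Classical in
theorem reflRep_wordProd_apply (ω : List B) (x : W) (e : ZMod 2) :
    cs.reflRep (π ω) (x, e) =
      (π ω * x * (π ω)⁻¹, e + (lis ω).count (π ω * x * (π ω)⁻¹)) := by
  have hsimple : cs.reflRep ∘ cs.simple = cs.reflPerm :=
    funext (cs.lift_apply_simple cs.isLiftable_reflPerm)
  have hprod : cs.reflRep (π ω) = (ω.map cs.reflPerm).prod := by
    rw [wordProd, map_list_prod, map_map, hsimple]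
  rw [hprod, prod_map_reflPerm_apply]

theorem reflRep_apply_fst (w x : W) (e : ZMod 2) : (cs.reflRep w (x, e)).1 = w * x * w⁻¹ := by
  obtain ⟨ω, rfl⟩ := cs.wordProd_surjective w
  rw [reflRep_wordProd_apply]

theorem reflRep_apply_add (w x : W) (e c : ZMod 2) :
    cs.reflRep w (x, e + c) = ((cs.reflRep w (x, e)).1, (cs.reflRep w (x, e)).2 + c) := by
  obtain ⟨ω, rfl⟩ := cs.wordProd_surjective w
  simp only [reflRep_wordProd_apply, add_right_comm]

theorem reflRep_reflection_apply {t : W} (ht : cs.IsReflection t) (e : ZMod 2) :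
    cs.reflRep t (t, e) = (t, e + 1) := by
  obtain ⟨v, i, rfl⟩ := ht
  set q := cs.reflRep v⁻¹ (v * s i * v⁻¹, e) with hqdef
  have hq : q = (s i, q.2) := Prod.ext (by rw [hqdef, reflRep_apply_fst]; group) rfl
  have hvq : cs.reflRep v q = (v * s i * v⁻¹, e) := by
    rw [hqdef, ← Equiv.Perm.mul_apply, ← map_mul, mul_inv_cancel, map_one, Equiv.Perm.one_apply]
  have hsplit : cs.reflRep (v * s i * v⁻¹) = cs.reflRep v * cs.reflPerm i * cs.reflRep v⁻¹ := by
    rw [map_mul, map_mul, reflRep, lift_apply_simple]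
  rw [hsplit, Equiv.Perm.mul_apply, Equiv.Perm.mul_apply, ← hqdef, hq, reflPerm_apply, if_pos rfl,
    reflRep_apply_add, simple_mul_simple_self, one_mul, ← hq, hvq]

theorem mem_leftInvSeq_of_isLeftInversion {ω : List B} {t : W}
    (ht : cs.IsLeftInversion (π ω) t) : t ∈ lis ω := by
  classical
  -- The parity of the multiplicity of `t` in `lis ω` only depends on `π ω`. A reduced word `γ`
  -- for `t * π ω` misses `t`, and multiplying by `t` flips that parity.
  by_contra hmem
  obtain ⟨γ, hγ, htω⟩ := cs.exists_isReduced (t * π ω)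
  have hmemγ : t ∉ lis γ := fun h ↦ by
    have := (cs.isLeftInversion_of_mem_leftInvSeq hγ h).2
    rw [← htω, ← mul_assoc, ht.1.mul_self, one_mul] at this
    exact lt_asymm this ht.2
  have hconj : ∀ u, u * ((π ω)⁻¹ * t * π ω) * u⁻¹ = u * (π ω)⁻¹ * t * (u * (π ω)⁻¹)⁻¹ := by
    intro u
    group
  have hω : cs.reflRep (π ω) ((π ω)⁻¹ * t * π ω, 0) = (t, 0) := by
    rw [reflRep_wordProd_apply, hconj, mul_inv_cancel, one_mul, inv_one, mul_one,
      count_eq_zero_of_not_mem hmem, Nat.cast_zero, add_zero]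
  have hγ' : cs.reflRep (π γ) ((π ω)⁻¹ * t * π ω, 0) = (t, 0) := by
    rw [reflRep_wordProd_apply, hconj, ← htω, mul_inv_cancel_right, ht.1.inv, ht.1.mul_self,
      one_mul, count_eq_zero_of_not_mem hmemγ, Nat.cast_zero, add_zero]
  have hsplit : cs.reflRep (π ω) = cs.reflRep t * cs.reflRep (π γ) := by
    rw [← map_mul, ← htω, ← mul_assoc, ht.1.mul_self, one_mul]
  rw [hsplit, Equiv.Perm.mul_apply, hγ', reflRep_reflection_apply cs ht.1] at hω
  exact absurd (congrArg Prod.snd hω) (by simp)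

end CoxeterSystem

namespace CoxInf

open CoxeterSystem

variable {B : Type*} {W : Type*} [Group W] {M : CoxeterMatrix B} (cs : CoxeterSystem M W)

local prefix:100 "s " => cs.simple
local prefix:100 "π " => cs.wordProd
local prefix:100 "ℓ " => cs.length
local prefix:100 "lis " => cs.leftInvSeq

theorem invSet_wordProd {ω : List B} (hω : cs.IsReduced ω) :
    invSet cs (π ω) = {t | t ∈ lis ω} :=
  Set.ext fun _ ↦ ⟨cs.mem_leftInvSeq_of_isLeftInversion, cs.isLeftInversion_of_mem_leftInvSeq hω⟩

theorem invSet_finite (w : W) : (invSet cs w).Finite := by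
  obtain ⟨ω, hω, rfl⟩ := cs.exists_isReduced w
  rw [invSet_wordProd cs hω]
  exact (lis ω).finite_toSet

theorem invSet_one : invSet cs 1 = ∅ :=
  Set.eq_empty_of_forall_notMem fun _ ht ↦ by simpa using ht.2

theorem invSet_wordProd_take_subset {ω : List B} (hω : cs.IsReduced ω) (n : ℕ) :
    invSet cs (π (ω.take n)) ⊆ invSet cs (π ω) := by
  rw [invSet_wordProd cs (hω.take n), invSet_wordProd cs hω, leftInvSeq_take]
  exact fun _ ↦ (List.take_subset _ _ ·)

theorem invSet_mul {x y : W} (h : ℓ (x * y) = ℓ x + ℓ y) :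
    invSet cs (x * y) = invSet cs x ∪ MulAut.conj x '' invSet cs y := by
  obtain ⟨ξ, hξ, rfl⟩ := cs.exists_isReduced x
  obtain ⟨η, hη, rfl⟩ := cs.exists_isReduced y
  have hξη : cs.IsReduced (ξ ++ η) := by
    rw [CoxeterSystem.IsReduced, wordProd_append, h, hξ, hη, List.length_append]
  rw [← wordProd_append, invSet_wordProd cs hξη, invSet_wordProd cs hξ, invSet_wordProd cs hη,
    leftInvSeq_append]
  ext t
  simp

theorem simple_mem_invSet_iff {i : B} {w : W} : s i ∈ invSet cs w ↔ cs.IsLeftDescent w i :=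
  cs.isLeftInversion_simple_iff_isLeftDescent w i

theorem length_simple_mul_add_one {i : B} {w : W} (h : s i ∈ invSet cs w) :
    ℓ (s i * w) + 1 = ℓ w :=
  (isLeftDescent_iff cs).mp ((simple_mem_invSet_iff cs).mp h)

theorem simple_mem_invSet_simple_mul_iff {i : B} {w : W} :
    s i ∈ invSet cs (s i * w) ↔ s i ∉ invSet cs w := by
  rw [simple_mem_invSet_iff, simple_mem_invSet_iff, isLeftDescent_iff_not_isLeftDescent_mul,
    simple_mul_simple_cancel_left]

theorem invSet_simple (i : B) : invSet cs (s i) = {s i} := by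
  rw [← wordProd_singleton, invSet_wordProd cs (by simp [CoxeterSystem.IsReduced]),
    leftInvSeq_singleton]
  simp

theorem invSet_simple_mul {i : B} {w : W} (h : s i ∉ invSet cs w) :
    invSet cs (s i * w) = insert (s i) (MulAut.conj (s i) '' invSet cs w) := by
  rw [simple_mem_invSet_iff, not_isLeftDescent_iff] at h
  rw [invSet_mul cs (by rw [h, length_simple, add_comm]), invSet_simple, Set.singleton_union]

theorem invSet_simple_mul_subset_iff_of_notMem {i : B} {z u : W} (hz : s i ∉ invSet cs z)
    (hu : s i ∉ invSet cs u) :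
    invSet cs (s i * z) ⊆ invSet cs (s i * u) ↔ invSet cs z ⊆ invSet cs u := by
  have hz' : s i ∉ MulAut.conj (s i) '' invSet cs z := by
    rwa [← (MulAut.conj (s i)).injective.mem_set_image, MulAut.conj_apply, inv_simple,
      simple_mul_simple_self, one_mul] at hz
  rw [invSet_simple_mul cs hz, invSet_simple_mul cs hu, Set.insert_subset_insert_iff hz',
    Set.image_subset_image_iff (MulAut.conj (s i)).injective]

theorem invSet_simple_mul_subset_iff_of_mem {i : B} {z u : W} (hz : s i ∈ invSet cs z)
    (hu : s i ∈ invSet cs u) :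
    invSet cs (s i * z) ⊆ invSet cs (s i * u) ↔ invSet cs z ⊆ invSet cs u := by
  rw [← cs.simple_mul_simple_cancel_left (w := z) i, simple_mem_invSet_simple_mul_iff] at hz
  rw [← cs.simple_mul_simple_cancel_left (w := u) i, simple_mem_invSet_simple_mul_iff] at hu
  simpa only [simple_mul_simple_cancel_left] using
    (invSet_simple_mul_subset_iff_of_notMem cs hz hu).symm

theorem invSet_simple_mul_subset_iff {i : B} {z u : W} (hz : s i ∉ invSet cs z)
    (hu : s i ∈ invSet cs u) :
    invSet cs (s i * z) ⊆ invSet cs u ↔ invSet cs z ⊆ invSet cs (s i * u) := by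
  rw [← (simple_mem_invSet_simple_mul_iff cs).not_left] at hu
  simpa only [simple_mul_simple_cancel_left] using
    invSet_simple_mul_subset_iff_of_notMem cs hz hu

theorem invSet_subset_iff {z u : W} :
    invSet cs z ⊆ invSet cs u ↔ ℓ z + ℓ (z⁻¹ * u) = ℓ u := by
  refine ⟨fun h ↦ ?_, fun h ↦ ?_⟩
  · induction hn : ℓ z generalizing z u with
    | zero => simp [cs.length_eq_zero_iff.mp hn]
    | succ n ih =>
      obtain ⟨i, hi⟩ := cs.exists_leftDescent_of_ne_one (w := z) (by rintro rfl; simp at hn)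
      rw [← simple_mem_invSet_iff] at hi
      have hiu := h hi
      have := ih ((invSet_simple_mul_subset_iff_of_mem cs hi hiu).mpr h)
        (by have := length_simple_mul_add_one cs hi; omega)
      rw [mul_inv_rev, inv_simple, mul_assoc, simple_mul_simple_cancel_left] at this
      have := length_simple_mul_add_one cs hi
      have := length_simple_mul_add_one cs hiu
      omega
  · rw [← mul_inv_cancel_left z u, invSet_mul cs (by rw [mul_inv_cancel_left]; omega)]
    exact Set.subset_union_left

theorem length_le_of_invSet_subset {z u : W} (h : invSet cs z ⊆ invSet cs u) : ℓ z ≤ ℓ u := by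
  have := (invSet_subset_iff cs).mp h
  omega

theorem eq_of_invSet_subset_of_length_le {z u : W} (h : invSet cs z ⊆ invSet cs u)
    (hlen : ℓ u ≤ ℓ z) : z = u := by
  have := (invSet_subset_iff cs).mp h
  rw [← mul_inv_cancel_left z u, cs.length_eq_zero_iff.mp (by omega : ℓ (z⁻¹ * u) = 0), mul_one]

theorem invSet_subset_invSet_simple_mul {i : B} {z u : W} (h : invSet cs z ⊆ invSet cs u)
    (hu : s i ∈ invSet cs u) (hz : s i ∉ invSet cs z) : invSet cs z ⊆ invSet cs (s i * u) := by
  have hzu := (invSet_subset_iff cs).mp h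
  have hiu := length_simple_mul_add_one cs hu
  rw [← mul_inv_cancel_left z u, invSet_mul cs (by rw [mul_inv_cancel_left]; omega)] at hu
  obtain ⟨t, ht, hts⟩ := hu.resolve_left hz
  -- `s i = z t z⁻¹` with `t` a left inversion of `z⁻¹ u`, so `z⁻¹ (s i u) = t (z⁻¹ u)` is shorter
  have htu : t * (z⁻¹ * u) = z⁻¹ * (s i * u) := by
    rw [← hts, MulAut.conj_apply]
    group
  have hshorter := htu ▸ ht.2
  have := cs.length_mul_le z (z⁻¹ * (s i * u))
  rw [mul_inv_cancel_left] at this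
  rw [invSet_subset_iff]
  omega

def IsJoin (a b v : W) : Prop :=
  ∀ q, invSet cs v ⊆ invSet cs q ↔ invSet cs a ⊆ invSet cs q ∧ invSet cs b ⊆ invSet cs q

theorem isJoin_of_invSet_subset {a b : W} (h : invSet cs b ⊆ invSet cs a) : IsJoin cs a b a :=
  fun _ ↦ ⟨fun ha ↦ ⟨ha, h.trans ha⟩, And.left⟩

namespace IsJoin

variable {cs} {i : B} {a b v : W}

theorem symm (h : IsJoin cs a b v) : IsJoin cs b a v :=
  fun q ↦ (h q).trans and_comm

theorem left (h : IsJoin cs a b v) : invSet cs a ⊆ invSet cs v :=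
  ((h v).mp subset_rfl).1

theorem right (h : IsJoin cs a b v) : invSet cs b ⊆ invSet cs v :=
  ((h v).mp subset_rfl).2

theorem invSet_subset (h : IsJoin cs a b v) {q : W} (ha : invSet cs a ⊆ invSet cs q)
    (hb : invSet cs b ⊆ invSet cs q) : invSet cs v ⊆ invSet cs q :=
  (h q).mpr ⟨ha, hb⟩

theorem simple_mul (ha : s i ∈ invSet cs a) (hb : s i ∈ invSet cs b)
    (h : IsJoin cs (s i * a) (s i * b) v) (hv : s i ∉ invSet cs v) :
    IsJoin cs a b (s i * v) := by
  intro q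
  constructor
  · intro hvq
    have hiq := hvq ((simple_mem_invSet_simple_mul_iff cs).mpr hv)
    obtain ⟨haq, hbq⟩ := (h _).mp ((invSet_simple_mul_subset_iff cs hv hiq).mp hvq)
    exact ⟨(invSet_simple_mul_subset_iff_of_mem cs ha hiq).mp haq,
      (invSet_simple_mul_subset_iff_of_mem cs hb hiq).mp hbq⟩
  · rintro ⟨haq, hbq⟩
    have hiq := haq ha
    exact (invSet_simple_mul_subset_iff cs hv hiq).mpr <| h.invSet_subset
      ((invSet_simple_mul_subset_iff_of_mem cs ha hiq).mpr haq)
      ((invSet_simple_mul_subset_iff_of_mem cs hb hiq).mpr hbq)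

theorem invSet_subset_simple_mul (hb : s i ∈ invSet cs b) (h : IsJoin cs a (s i * b) v)
    (hv : s i ∉ invSet cs v) : invSet cs b ⊆ invSet cs (s i * v) :=
  (invSet_simple_mul_subset_iff_of_mem cs hb ((simple_mem_invSet_simple_mul_iff cs).mpr hv)).mp
    (by simpa only [simple_mul_simple_cancel_left] using h.right)

theorem isJoin_iff_isJoin_simple_mul (ha : s i ∉ invSet cs a) (hb : s i ∈ invSet cs b)
    (h : IsJoin cs a (s i * b) v) (hv : s i ∉ invSet cs v) (w : W) :
    IsJoin cs a b w ↔ IsJoin cs a (s i * v) w := by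
  suffices hq : ∀ q, invSet cs b ⊆ invSet cs q ∧ invSet cs a ⊆ invSet cs q ↔
      invSet cs (s i * v) ⊆ invSet cs q ∧ invSet cs a ⊆ invSet cs q by
    simp only [IsJoin, and_comm (a := invSet cs a ⊆ _), hq]
  refine fun q ↦ ⟨fun ⟨hbq, haq⟩ ↦ ⟨?_, haq⟩,
    fun ⟨hvq, haq⟩ ↦ ⟨(h.invSet_subset_simple_mul hb hv).trans hvq, haq⟩⟩
  have hiq := hbq hb
  exact (invSet_simple_mul_subset_iff cs hv hiq).mpr <| h.invSet_subset
    (invSet_subset_invSet_simple_mul cs haq hiq ha)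
    ((invSet_simple_mul_subset_iff_of_mem cs hb hiq).mpr hbq)

end IsJoin

theorem exists_isJoin {w₁ w₂ p : W} (h₁ : invSet cs w₁ ⊆ invSet cs p)
    (h₂ : invSet cs w₂ ⊆ invSet cs p) : ∃ v, IsJoin cs w₁ w₂ v := by
  induction hn : 3 * ℓ p - ℓ w₁ - ℓ w₂ using Nat.strong_induction_on generalizing p w₁ w₂ with
  | _ n ih =>
  have hl₁ := length_le_of_invSet_subset cs h₁
  have hl₂ := length_le_of_invSet_subset cs h₂
  wlog hlen : ℓ w₂ ≤ ℓ w₁ generalizing w₁ w₂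
  · obtain ⟨v, hv⟩ := this h₂ h₁ (by omega) hl₂ hl₁ (by omega)
    exact ⟨v, hv.symm⟩
  by_cases h₂₁ : invSet cs w₂ ⊆ invSet cs w₁
  · exact ⟨w₁, isJoin_of_invSet_subset cs h₂₁⟩
  obtain ⟨j, hj⟩ := cs.exists_leftDescent_of_ne_one (w := w₂) fun h ↦ by
    simp [h, invSet_one] at h₂₁
  rw [← simple_mem_invSet_iff] at hj
  have hjp := h₂ hj
  have hjp' : s j ∉ invSet cs (s j * p) := fun h ↦ (simple_mem_invSet_simple_mul_iff cs).mp h hjp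
  have hlp := length_simple_mul_add_one cs hjp
  have hl₂' := length_simple_mul_add_one cs hj
  have h₂' := (invSet_simple_mul_subset_iff_of_mem cs hj hjp).mpr h₂
  by_cases hj₁ : s j ∈ invSet cs w₁
  · have hl₁' := length_simple_mul_add_one cs hj₁
    have h₁' := (invSet_simple_mul_subset_iff_of_mem cs hj₁ hjp).mpr h₁
    obtain ⟨v, hv⟩ := ih _ (by omega) h₁' h₂' rfl
    exact ⟨s j * v, hv.simple_mul hj₁ hj fun hjv ↦ hjp' (hv.invSet_subset h₁' h₂' hjv)⟩
  have h₁' := invSet_subset_invSet_simple_mul cs h₁ hjp hj₁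
  obtain ⟨v, hv⟩ := ih _ (by omega) h₁' h₂' rfl
  have hjv : s j ∉ invSet cs v := fun hjv ↦ hjp' (hv.invSet_subset h₁' h₂' hjv)
  have hvp := (invSet_simple_mul_subset_iff cs hjv hjp).mpr (hv.invSet_subset h₁' h₂')
  -- `w₂ ≤ s j * v`, and equality would put `w₁` below `s j * w₂`, which is shorter than `w₁`
  have hgrow : ℓ w₂ < ℓ (s j * v) := by
    by_contra hle
    have h₂v := eq_of_invSet_subset_of_length_le cs (hv.invSet_subset_simple_mul hj hjv)
      (by omega)
    have := length_le_of_invSet_subset cs hv.left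
    rw [h₂v, simple_mul_simple_cancel_left] at hl₂'
    omega
  obtain ⟨u, hu⟩ := ih _ (by have := length_le_of_invSet_subset cs hvp; omega) h₁ hvp rfl
  exact ⟨u, (hv.isJoin_iff_isJoin_simple_mul hj₁ hj hjv u).mpr hu⟩

theorem prefixWord_take (ω : ℕ → B) {m n : ℕ} (h : m ≤ n) :
    (prefixWord ω n).take m = prefixWord ω m :=
  List.ext_getElem (by simp [prefixWord, h]) fun _ _ _ ↦ by simp [prefixWord]

theorem exists_prefixWord_eq {L : ℕ → List B} (hL : ∀ k, L k <+: L (k + 1))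
    (hunb : ∀ n, ∃ k, n < (L k).length) :
    ∃ ω : ℕ → B, ∀ k, prefixWord ω (L k).length = L k := by
  have hpre : ∀ {k k'}, k ≤ k' → L k <+: L k' := fun h ↦ by
    induction h with
    | refl => exact List.prefix_refl _
    | step _ ih => exact ih.trans (hL _)
  choose K hK using hunb
  refine ⟨fun n ↦ (L (K n))[n]'(hK n), fun k ↦ List.ext_getElem (by simp [prefixWord]) ?_⟩
  intro n hn hnk
  simp only [prefixWord, List.getElem_ofFn]
  rcases le_total k (K n) with h | h
  · exact ((hpre h).getElem hnk).symm
  · exact (hpre h).getElem (hK n)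

theorem exists_reduced_words_of_monotone {c : ℕ → W} (hc : Monotone fun k ↦ invSet cs (c k)) :
    ∃ L : ℕ → List B, (∀ k, L k <+: L (k + 1)) ∧ ∀ k, cs.IsReduced (L k) ∧ π (L k) = c k := by
  obtain ⟨L₀, hL₀, hcL₀⟩ := cs.exists_isReduced (c 0)
  choose δ hδ hcδ using fun k ↦ cs.exists_isReduced ((c k)⁻¹ * c (k + 1))
  let L : ℕ → List B := fun k ↦ Nat.rec L₀ (fun k l ↦ l ++ δ k) k
  refine ⟨L, fun k ↦ List.prefix_append _ _, fun k ↦ ?_⟩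
  induction k with
  | zero => exact ⟨hL₀, hcL₀.symm⟩
  | succ k ih =>
    have hπ : π (L k ++ δ k) = c (k + 1) := by
      rw [wordProd_append, ih.2, ← hcδ, mul_inv_cancel_left]
    refine ⟨?_, hπ⟩
    rw [CoxeterSystem.IsReduced, hπ, List.length_append, ← ih.1, ← hδ k, ih.2, ← hcδ,
      (invSet_subset_iff cs).mp (hc k.le_succ)]

local notation "W̄" => W ⊕ {ω : ℕ → B // IsInfRedExpr cs ω}

theorem exists_barInv_eq_iUnion_of_unbounded {c : ℕ → W} (hc : Monotone fun k ↦ invSet cs (c k))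
    (hunb : ∀ n, ∃ k, n < ℓ (c k)) :
    ∃ ω : {ω : ℕ → B // IsInfRedExpr cs ω}, barInv cs (.inr ω) = ⋃ k, invSet cs (c k) := by
  obtain ⟨L, hLpre, hL⟩ := exists_reduced_words_of_monotone cs hc
  have hlen : ∀ k, (L k).length = ℓ (c k) := fun k ↦ by rw [← (hL k).1, (hL k).2]
  obtain ⟨ω, hω⟩ := exists_prefixWord_eq hLpre fun n ↦ (hunb n).imp fun k hk ↦ hlen k ▸ hk
  have hprefix : ∀ {n k}, n < ℓ (c k) → prefixWord ω n = (L k).take n := fun {n k} h ↦ by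
    rw [← hω k, prefixWord_take _ (hlen k ▸ h.le)]
  have hinf : IsInfRedExpr cs ω := fun n ↦ by
    obtain ⟨k, hk⟩ := hunb n
    rw [hprefix hk]
    exact (hL k).1.take n
  refine ⟨⟨ω, hinf⟩, subset_antisymm (Set.iUnion_subset fun n ↦ ?_) (Set.iUnion_subset fun k ↦ ?_)⟩
  · obtain ⟨k, hk⟩ := hunb n
    rw [hprefix hk]
    exact (invSet_wordProd_take_subset cs (hL k).1 n).trans
      (Set.subset_iUnion_of_subset k (by rw [(hL k).2]))
  · rw [← (hL k).2, ← hω k]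
    exact Set.subset_iUnion_of_subset _ subset_rfl

theorem exists_barInv_eq_iUnion {c : ℕ → W} (hc : Monotone fun k ↦ invSet cs (c k)) :
    ∃ v : W̄, barInv cs v = ⋃ k, invSet cs (c k) := by
  by_cases hunb : ∀ n, ∃ k, n < ℓ (c k)
  · obtain ⟨ω, hω⟩ := exists_barInv_eq_iUnion_of_unbounded cs hc hunb
    exact ⟨.inr ω, hω⟩
  push Not at hunb
  obtain ⟨n, hn⟩ := hunb
  obtain ⟨N, hN⟩ : ∃ N, ∀ k, ℓ (c k) ≤ ℓ (c N) := by
    have hbdd : BddAbove (Set.range fun k ↦ ℓ (c k)) := ⟨n, by rintro _ ⟨k, rfl⟩; exact hn k⟩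
    obtain ⟨N, hN⟩ := Nat.sSup_mem (Set.range_nonempty _) hbdd
    refine ⟨N, fun k ↦ ?_⟩
    simp only at hN
    exact hN ▸ le_csSup hbdd ⟨k, rfl⟩
  refine ⟨.inl (c N), subset_antisymm (Set.subset_iUnion_of_subset N subset_rfl)
    (Set.iUnion_subset fun k ↦ ?_)⟩
  have hmax : c N = c (max k N) :=
    eq_of_invSet_subset_of_length_le cs (hc (le_max_right k N)) (hN _)
  exact hmax ▸ hc (le_max_left k N)

theorem invSet_prefixWord_mono {ω : ℕ → B} (hω : IsInfRedExpr cs ω) :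
    Monotone fun n ↦ invSet cs (π (prefixWord ω n)) := fun m n h ↦ by
  dsimp only
  rw [← prefixWord_take ω h]
  exact invSet_wordProd_take_subset cs (hω n) m

theorem barInv_countable (a : W̄) : (barInv cs a).Countable := by
  cases a with
  | inl w => exact (invSet_finite cs w).countable
  | inr ω => exact Set.countable_iUnion fun n ↦ (invSet_finite cs _).countable

theorem exists_invSet_subset_barInv (a : W̄) {S : Set W} (hS : S.Finite) (h : S ⊆ barInv cs a) :
    ∃ p, S ⊆ invSet cs p ∧ invSet cs p ⊆ barInv cs a := by
  cases a with
  | inl w => exact ⟨w, h, subset_rfl⟩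
  | inr ω =>
    have hS' : (hS.toFinset : Set W) ⊆ ⋃ n, invSet cs (π (prefixWord ω.1 n)) := by
      simpa [barInv] using h
    obtain ⟨n, hn⟩ :=
      (invSet_prefixWord_mono cs ω.2).directed_le.exists_mem_subset_of_finset_subset_biUnion hS'
    exact ⟨_, by simpa using hn, Set.subset_iUnion_of_subset n subset_rfl⟩

theorem barInv_subset_biUnion_invSet (a : W̄) :
    barInv cs a ⊆ ⋃ x ∈ {x | invSet cs x ⊆ barInv cs a}, invSet cs x := by
  cases a with
  | inl w => exact Set.subset_biUnion_of_mem (u := invSet cs) (subset_rfl : invSet cs w ⊆ _)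
  | inr ω =>
    exact Set.iUnion_subset fun n ↦
      Set.subset_biUnion_of_mem (u := invSet cs) (Set.subset_iUnion_of_subset n subset_rfl)

theorem directedOn_lowerBounds {A : Set W̄} (hA : A.Nonempty) :
    DirectedOn (fun x y ↦ invSet cs x ⊆ invSet cs y) {x | ∀ a ∈ A, invSet cs x ⊆ barInv cs a} := by
  intro x hx y hy
  have hxy := (invSet_finite cs x).union (invSet_finite cs y)
  obtain ⟨a₀, ha₀⟩ := hA
  obtain ⟨p, hp, -⟩ :=
    exists_invSet_subset_barInv cs a₀ hxy (Set.union_subset (hx a₀ ha₀) (hy a₀ ha₀))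
  obtain ⟨v, hv⟩ := exists_isJoin cs (Set.union_subset_iff.mp hp).1 (Set.union_subset_iff.mp hp).2
  refine ⟨v, fun a ha ↦ ?_, hv.left, hv.right⟩
  obtain ⟨q, hq, hqa⟩ :=
    exists_invSet_subset_barInv cs a hxy (Set.union_subset (hx a ha) (hy a ha))
  exact (hv.invSet_subset (Set.union_subset_iff.mp hq).1 (Set.union_subset_iff.mp hq).2).trans hqa

end CoxInf

open CoxInf in
/-- The set `W̄ = W ⊎ W_l` of group elements together with infinite reduced words of an
arbitrary Coxeter system `(W,S)`, partially ordered by the weak order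
(`x ≤ y` iff `Φ_x ⊆ Φ_y`), is a complete meet semilattice: every nonempty subset of `W̄`
admits a greatest lower bound in `W̄`. -/
theorem infinite_reduced_words_complete_meet_semilattice
    {B : Type*} {W : Type*} [Group W] {M : CoxeterMatrix B} (cs : CoxeterSystem M W)
    (A : Set (W ⊕ {ω : ℕ → B // IsInfRedExpr cs ω})) (hA : A.Nonempty) :
    ∃ v : W ⊕ {ω : ℕ → B // IsInfRedExpr cs ω},
      (∀ a ∈ A, barInv cs v ⊆ barInv cs a) ∧
      ∀ u : W ⊕ {ω : ℕ → B // IsInfRedExpr cs ω},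
        (∀ a ∈ A, barInv cs u ⊆ barInv cs a) → barInv cs u ⊆ barInv cs v := by
  obtain ⟨a₀, ha₀⟩ := hA
  obtain ⟨c, -, hc, hcU⟩ := (directedOn_lowerBounds cs ⟨a₀, ha₀⟩).exists_monotone_iUnion_eq
    ⟨1, fun _ _ ↦ by simp [invSet_one]⟩
    ((barInv_countable cs a₀).mono (Set.iUnion₂_subset fun x hx ↦ hx a₀ ha₀))
  obtain ⟨v, hv⟩ := exists_barInv_eq_iUnion cs hc
  refine ⟨v, fun a ha ↦ ?_, fun u hu ↦ ?_⟩
  · rw [hv, hcU]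
    exact Set.iUnion₂_subset fun x hx ↦ hx a ha
  · rw [hv, hcU]
    exact (barInv_subset_biUnion_invSet cs u).trans
      (Set.biUnion_mono (fun x hx a ha ↦ hx.trans (hu a ha)) fun _ _ ↦ subset_rfl)
end

section
/- Let Φ be an irreducible crystallographic root system with positive system Φ⁺ and simple system Π, and let L ⊊ Π. Then for every α ∈ Φ⁺, d_L(α) = h_L(α). -/
/-!
Let `g` be the linear functional that is `0` on `L` and `1` on the other simple roots; it exists
because the simple roots are pairwise obtuse and lie in an open half-space, hence are linearly
independent, and `g α = h_L(α)`. A root lies in `Φ⁺_{L,∅}` exactly when `g ≥ 1` on it, so a sum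
of `n` such roots has `g ≥ n`, whence `d_L(α) ≤ h_L(α)`. Conversely, induct on the height of `α`
and pick a simple root `π` with `⟪α, π⟫ > 0`. If `π ∉ L`, then `α - π` is a positive root with
`h_L` one less, and `α = π + (α - π)`. If `π ∈ L`, the reflection `s_π` lowers the height of `α`,
fixes `g` and preserves `Φ⁺_{L,∅}`, so a decomposition of `s_π α` reflects back to one of `α`.
-/

open scoped RealInnerProductSpace

namespace AffineBiclosed

variable {V : Type*} [NormedAddCommGroup V] [InnerProductSpace ℝ V]

/-- An irreducible crystallographic root system in the Euclidean space `V`. -/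
structure IsIrrCrystRootSystem (Φ : Set V) : Prop where
  finite : Φ.Finite
  nonzero : (0 : V) ∉ Φ
  spanning : Submodule.span ℝ Φ = ⊤
  reflect_mem : ∀ α ∈ Φ, ∀ β ∈ Φ, β - (2 * ⟪β, α⟫ / ⟪α, α⟫) • α ∈ Φ
  crystallographic : ∀ α ∈ Φ, ∀ β ∈ Φ, ∃ k : ℤ, (k : ℝ) = 2 * ⟪β, α⟫ / ⟪α, α⟫
  reduced : ∀ α ∈ Φ, ∀ t : ℝ, t • α ∈ Φ → t = 1 ∨ t = -1
  irreducible : ∀ Φ₁ Φ₂ : Set V, Φ₁ ∪ Φ₂ = Φ → Disjoint Φ₁ Φ₂ →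
      (∀ α ∈ Φ₁, ∀ β ∈ Φ₂, ⟪α, β⟫ = 0) → Φ₁ = ∅ ∨ Φ₂ = ∅

/-- `Pos` is a positive system of the root system `Φ`. -/
def IsPositiveSystem (Φ Pos : Set V) : Prop :=
  ∃ f : V →ₗ[ℝ] ℝ, (∀ α ∈ Φ, f α ≠ 0) ∧ Pos = {α ∈ Φ | 0 < f α}

/-- The simple system of a positive system: its indecomposable elements. -/
def simples (Pos : Set V) : Set V :=
  {α ∈ Pos | ¬ ∃ β ∈ Pos, ∃ γ ∈ Pos, α = β + γ}

/-- The root subsystem of `Φ` generated by a set `Δ` of simple roots. -/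
def subsys (Φ Δ : Set V) : Set V := Φ ∩ (Submodule.span ℝ Δ : Set V)

/-- The biclosed set `Ψ⁺_{L,M} = (Ψ⁺ \ Φ_L) ∪ Φ_M` in `Φ`. -/
def posLM (Φ Pos L M : Set V) : Set V := (Pos \ subsys Φ L) ∪ subsys Φ M

section Closure

variable {E : Type*} [AddCommGroup E] [Module ℝ E]

/-- `Γ` is closed in `T`. -/
def IsClosedIn (T Γ : Set E) : Prop :=
  Γ ⊆ T ∧ ∀ a ∈ Γ, ∀ b ∈ Γ, ∀ k₁ k₂ : ℝ, 0 ≤ k₁ → 0 ≤ k₂ →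
    k₁ • a + k₂ • b ∈ T → k₁ • a + k₂ • b ∈ Γ

/-- `Γ` is biclosed in `T`. -/
def IsBiclosedIn (T Γ : Set E) : Prop := IsClosedIn T Γ ∧ IsClosedIn T (T \ Γ)

/-- The closure of `X` in `T`: the smallest subset of `T` closed in `T` containing `X`. -/
def closureIn (T X : Set E) : Set E := ⋂₀ {Γ : Set E | X ⊆ Γ ∧ IsClosedIn T Γ}

end Closure

/-- For `Γ ⊆ Φ`, the set `Γ̂ ⊆ V × ℝ`, where `δ = (0,1)`; positivity is measured by the
standard positive system `Pos`. -/
def hat (Pos Γ : Set V) : Set (V × ℝ) :=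
  {x | ∃ α ∈ Γ, ∃ n : ℕ, x.1 = α ∧
    ((α ∈ Pos ∧ x.2 = (n : ℝ)) ∨ (α ∉ Pos ∧ x.2 = (n : ℝ) + 1))}

/-- The reflection in the affine root `a`, as a function on `V × ℝ`, with respect to the
degenerate bilinear form `⟨(v,s),(w,t)⟩ = ⟪v,w⟫`. -/
noncomputable def reflVec (a : V × ℝ) (x : V × ℝ) : V × ℝ :=
  x - (2 * ⟪x.1, a.1⟫ / ⟪a.1, a.1⟫) • a

theorem reflVec_involutive (a : V × ℝ) : Function.Involutive (reflVec a) := by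
  intro x
  by_cases h : ⟪a.1, a.1⟫ = 0
  · simp only [reflVec, h, div_zero, zero_smul, sub_zero]
  · unfold reflVec
    have h1 : (x - (2 * ⟪x.1, a.1⟫ / ⟪a.1, a.1⟫) • a).1
        = x.1 - (2 * ⟪x.1, a.1⟫ / ⟪a.1, a.1⟫) • a.1 := rfl
    rw [h1]
    have key : 2 * ⟪x.1 - (2 * ⟪x.1, a.1⟫ / ⟪a.1, a.1⟫) • a.1, a.1⟫ / ⟪a.1, a.1⟫
        = -(2 * ⟪x.1, a.1⟫ / ⟪a.1, a.1⟫) := by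
      rw [inner_sub_left, real_inner_smul_left]
      field_simp
      ring
    rw [key, neg_smul, sub_neg_eq_add, sub_add_cancel]

/-- The reflection in the affine root `a`, as a permutation of `V × ℝ`. -/
noncomputable def reflPerm (a : V × ℝ) : Equiv.Perm (V × ℝ) :=
  Function.Involutive.toPerm _ (reflVec_involutive a)

/-- The affine Weyl group of `Φ`, realized as the group of permutations of `V × ℝ`
generated by the reflections in the affine roots. -/
noncomputable def affineWeyl (Φ Pos : Set V) : Subgroup (Equiv.Perm (V × ℝ)) :=
  Subgroup.closure (reflPerm '' hat Pos Φ)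

/-- The inversion set `Φ_w = {a ∈ Φ̃⁺ | w⁻¹ a ∈ −Φ̃⁺}`. -/
def invSetOf (Φ Pos : Set V) (w : Equiv.Perm (V × ℝ)) : Set (V × ℝ) :=
  {a ∈ hat Pos Φ | -(w⁻¹ a) ∈ hat Pos Φ}

/-- The product of the reflections in the listed affine roots. -/
noncomputable def wordProd (l : List (V × ℝ)) : Equiv.Perm (V × ℝ) :=
  (l.map reflPerm).prod

/-- The simple affine roots: the indecomposable elements of `Φ̃⁺`. -/
def affSimples (Φ Pos : Set V) : Set (V × ℝ) :=
  {a ∈ hat Pos Φ | ¬ ∃ b ∈ hat Pos Φ, ∃ c ∈ hat Pos Φ, a = b + c}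

/-- `l` is a reduced word (in the simple affine reflections). -/
def IsReducedWord (Φ Pos : Set V) (l : List (V × ℝ)) : Prop :=
  (∀ a ∈ l, a ∈ affSimples Φ Pos) ∧
    ∀ l' : List (V × ℝ), (∀ a ∈ l', a ∈ affSimples Φ Pos) →
      wordProd l' = wordProd l → l.length ≤ l'.length

/-- The length-`n` prefix of an infinite word. -/
def prefixWord (ω : ℕ → V × ℝ) (n : ℕ) : List (V × ℝ) :=
  List.ofFn (fun i : Fin n => ω i)

/-- `ω` is an infinite reduced expression. -/
def IsInfRedExpr (Φ Pos : Set V) (ω : ℕ → V × ℝ) : Prop :=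
  ∀ n, IsReducedWord Φ Pos (prefixWord ω n)

/-- The inversion set of an infinite reduced expression. -/
def infInvSet (Φ Pos : Set V) (ω : ℕ → V × ℝ) : Set (V × ℝ) :=
  ⋃ n, invSetOf Φ Pos (wordProd (prefixWord ω n))

/-- The action `x·Γ = (Φ_x \ x(−Γ)) ∪ (x(Γ) \ (−Φ_x))` of the affine Weyl group on
biclosed sets. -/
def dotAct (Φ Pos : Set V) (x : Equiv.Perm (V × ℝ)) (Γ : Set (V × ℝ)) : Set (V × ℝ) :=
  (invSetOf Φ Pos x \ (⇑x '' (-Γ))) ∪ ((⇑x '' Γ) \ (-(invSetOf Φ Pos x)))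

end AffineBiclosed

namespace AffineBiclosed

variable {V : Type*} [NormedAddCommGroup V] [InnerProductSpace ℝ V]

open Classical in
/-- The function `d_L : Φ⁺ → ℕ`: for `α ∈ Φ⁺_{L,∅}`, the maximal `n` such that `α` can be
written as the sum of `n` elements of `Φ⁺_{L,∅}`; and `0` otherwise. -/
noncomputable def dL (Φ Pos L : Set V) (α : V) : ℕ :=
  if α ∈ posLM Φ Pos L ∅ then
    sSup {n : ℕ | ∃ l : List V, l.length = n ∧ (∀ β ∈ l, β ∈ posLM Φ Pos L ∅) ∧ l.sum = α}
  else 0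

end AffineBiclosed

namespace AffineBiclosed

variable {V : Type*} [NormedAddCommGroup V] [InnerProductSpace ℝ V]

theorem _root_.Set.Finite.induction_on_lt_apply {ι : Type*} {s : Set ι} (hs : s.Finite)
    (f : ι → ℝ) {P : ι → Prop} (h : ∀ a ∈ s, (∀ b ∈ s, f b < f a → P b) → P a)
    {a : ι} (ha : a ∈ s) : P a :=
  (Set.wellFoundedOn_image.mp (hs.image f).wellFoundedOn).induction ha h

theorem exists_linearMap_eq_on {K E : Type*} [Field K] [AddCommGroup E] [Module K E]
    {s : Set E} (hs : LinearIndepOn K id s) (c : E → K) :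
    ∃ g : E →ₗ[K] K, ∀ v ∈ s, g v = c v := by
  let b := Module.Basis.extend hs
  refine ⟨b.constr K fun i => c i, fun v hv => ?_⟩
  simpa [b, Module.Basis.extend_apply_self] using
    b.constr_basis K (fun i => c i) ⟨v, hs.subset_extend _ hv⟩

theorem eq_zero_of_sum_smul_eq_zero {ι E : Type*} [AddCommGroup E] [Module ℝ E]
    (f : E →ₗ[ℝ] ℝ) {v : ι → E} (hf : ∀ i, 0 < f (v i)) {s : Finset ι} {a : ι → ℝ}
    (ha : ∀ i ∈ s, 0 ≤ a i) (hsum : ∑ i ∈ s, a i • v i = 0) : ∀ i ∈ s, a i = 0 := by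
  have hterms : ∑ i ∈ s, a i * f (v i) = 0 := by
    simpa only [map_sum, map_smul, smul_eq_mul, map_zero] using congr_arg f hsum
  intro i hi
  have := (Finset.sum_eq_zero_iff_of_nonneg fun j hj =>
    mul_nonneg (ha j hj) (hf j).le).mp hterms i hi
  exact (mul_eq_zero.mp this).resolve_right (hf i).ne'

theorem linearIndependent_of_inner_nonpos {ι : Type*} {v : ι → V} (f : V →ₗ[ℝ] ℝ)
    (hf : ∀ i, 0 < f (v i)) (hv : Pairwise fun i j => ⟪v i, v j⟫ ≤ 0) :
    LinearIndependent ℝ v := by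
  rw [linearIndependent_iff']
  intro s c hsum i hi
  -- Split `c = c⁺ - c⁻`: then `x = y` below, while `⟪x, y⟫ ≤ 0` since `c⁺ j * c⁻ j = 0`.
  set x := ∑ j ∈ s, (c j)⁺ • v j
  set y := ∑ j ∈ s, (c j)⁻ • v j
  have hxy : x = y := by
    rw [← sub_eq_zero, ← Finset.sum_sub_distrib, ← hsum]
    simp only [← sub_smul, posPart_sub_negPart]
  have hinner : ⟪x, y⟫ ≤ 0 := by
    simp only [x, y, sum_inner, inner_sum, real_inner_smul_left, real_inner_smul_right]
    refine Finset.sum_nonpos fun j _ => Finset.sum_nonpos fun j' _ => ?_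
    rcases eq_or_ne j j' with rfl | hjj'
    · rcases le_total (c j) 0 with h | h <;> simp [h]
    · exact mul_nonpos_of_nonneg_of_nonpos (negPart_nonneg _) <|
        mul_nonpos_of_nonneg_of_nonpos (posPart_nonneg _) (hv hjj'.symm)
  have hx : x = 0 := real_inner_self_nonpos.mp (by rwa [← hxy] at hinner)
  have hpos := eq_zero_of_sum_smul_eq_zero f hf (fun j _ => posPart_nonneg (c j)) hx
  have hneg := eq_zero_of_sum_smul_eq_zero f hf (fun j _ => negPart_nonneg (c j))
    (hxy ▸ hx)
  rw [← posPart_sub_negPart (c i), hpos i hi, hneg i hi, sub_zero]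

noncomputable def rootReflection (α : V) : Module.End ℝ V :=
  Module.preReflection α ((2 / ⟪α, α⟫) • innerₛₗ ℝ α)

theorem rootReflection_apply (α β : V) :
    rootReflection α β = β - (2 * ⟪β, α⟫ / ⟪α, α⟫) • α := by
  simp [rootReflection, Module.preReflection_apply, real_inner_comm, mul_div_right_comm]

theorem rootReflection_involutive {α : V} (hα : α ≠ 0) :
    Function.Involutive (rootReflection α) :=
  Module.involutive_preReflection <| by
    simpa only [LinearMap.smul_apply, innerₛₗ_apply_apply, smul_eq_mul] using
      div_mul_cancel₀ 2 (inner_self_ne_zero.mpr hα)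

theorem apply_rootReflection_of_apply_eq_zero (g : V →ₗ[ℝ] ℝ) {α : V} (hα : g α = 0) (β : V) :
    g (rootReflection α β) = g β := by
  rw [rootReflection_apply, map_sub, map_smul, hα, smul_zero, sub_zero]

structure IsCrystRootSystem (Φ : Set V) : Prop where
  finite : Φ.Finite
  nonzero : (0 : V) ∉ Φ
  rootReflection_mem : ∀ α ∈ Φ, ∀ β ∈ Φ, rootReflection α β ∈ Φ
  crystallographic : ∀ α ∈ Φ, ∀ β ∈ Φ, ∃ k : ℤ, (k : ℝ) = 2 * ⟪β, α⟫ / ⟪α, α⟫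

theorem IsIrrCrystRootSystem.isCrystRootSystem {Φ : Set V} (h : IsIrrCrystRootSystem Φ) :
    IsCrystRootSystem Φ where
  finite := h.finite
  nonzero := h.nonzero
  rootReflection_mem α hα β hβ := by
    rw [rootReflection_apply]
    exact h.reflect_mem α hα β hβ
  crystallographic := h.crystallographic

namespace IsCrystRootSystem

variable {Φ : Set V} {α β : V}

theorem ne_zero (hΦ : IsCrystRootSystem Φ) (hα : α ∈ Φ) : α ≠ 0 :=
  fun h => hΦ.nonzero (h ▸ hα)

theorem inner_self_pos (hΦ : IsCrystRootSystem Φ) (hα : α ∈ Φ) : 0 < ⟪α, α⟫ :=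
  real_inner_self_pos.mpr (hΦ.ne_zero hα)

theorem neg_mem (hΦ : IsCrystRootSystem Φ) (hα : α ∈ Φ) : -α ∈ Φ := by
  have h := hΦ.rootReflection_mem α hα α hα
  rwa [rootReflection_apply, mul_div_assoc, div_self (hΦ.inner_self_pos hα).ne', mul_one,
    two_smul, sub_add_cancel_left] at h

theorem sub_mem_of_inner_pos (hΦ : IsCrystRootSystem Φ) (hα : α ∈ Φ) (hβ : β ∈ Φ)
    (hpos : 0 < ⟪α, β⟫) (hne : α ≠ β) : α - β ∈ Φ := by
  obtain ⟨a, ha⟩ := hΦ.crystallographic α hα β hβ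
  obtain ⟨b, hb⟩ := hΦ.crystallographic β hβ α hα
  rw [real_inner_comm] at ha
  have hαα := hΦ.inner_self_pos hα
  have hββ := hΦ.inner_self_pos hβ
  have ha0 : (0 : ℝ) < a := ha ▸ div_pos (mul_pos two_pos hpos) hαα
  have hb0 : (0 : ℝ) < b := hb ▸ div_pos (mul_pos two_pos hpos) hββ
  by_cases hb1 : b = 1
  · have h := hΦ.rootReflection_mem β hβ α hα
    rwa [rootReflection_apply, ← hb, hb1, Int.cast_one, one_smul] at h
  by_cases ha1 : a = 1
  · have h := hΦ.neg_mem (hΦ.rootReflection_mem α hα β hβ)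
    rwa [rootReflection_apply, real_inner_comm, ← ha, ha1, Int.cast_one, one_smul, neg_sub] at h
  -- Otherwise both Cartan integers are `≥ 2`, which forces `‖α - β‖ = 0`.
  have ha2 : (2 : ℝ) ≤ a := by
    have : (0 : ℤ) < a := by exact_mod_cast ha0
    exact_mod_cast (show (2 : ℤ) ≤ a by omega)
  have hb2 : (2 : ℝ) ≤ b := by
    have : (0 : ℤ) < b := by exact_mod_cast hb0
    exact_mod_cast (show (2 : ℤ) ≤ b by omega)
  rw [ha, le_div_iff₀ hαα] at ha2
  rw [hb, le_div_iff₀ hββ] at hb2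
  have h : ⟪α - β, α - β⟫ ≤ 0 := by
    rw [inner_sub_left, inner_sub_right, inner_sub_right, real_inner_comm α β]
    linarith
  exact absurd (sub_eq_zero.mp (real_inner_self_nonpos.mp h)) hne

end IsCrystRootSystem

namespace IsPositiveSystem

variable {Φ Pos : Set V} {α : V}

theorem subset (hPos : IsPositiveSystem Φ Pos) : Pos ⊆ Φ := by
  obtain ⟨f, -, rfl⟩ := hPos
  exact fun _ h => h.1

theorem mem_or_neg_mem (hPos : IsPositiveSystem Φ Pos) (hΦ : IsCrystRootSystem Φ)
    (hα : α ∈ Φ) : α ∈ Pos ∨ -α ∈ Pos := by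
  obtain ⟨f, hf, rfl⟩ := hPos
  rcases (hf α hα).lt_or_gt with h | h
  · exact Or.inr ⟨hΦ.neg_mem hα, by simpa using h⟩
  · exact Or.inl ⟨hα, h⟩

theorem exists_forall_pos (hPos : IsPositiveSystem Φ Pos) :
    ∃ f : V →ₗ[ℝ] ℝ, ∀ α ∈ Pos, 0 < f α := by
  obtain ⟨f, -, rfl⟩ := hPos
  exact ⟨f, fun _ h => h.2⟩

@[elab_as_elim]
theorem induction_on_sub_smul (hPos : IsPositiveSystem Φ Pos) (hfin : Φ.Finite)
    {P : V → Prop} (h : ∀ α ∈ Pos,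
      (∀ c : ℝ, 0 < c → ∀ γ ∈ Pos, α - c • γ ∈ Pos → P (α - c • γ)) → P α)
    (hα : α ∈ Pos) : P α := by
  obtain ⟨f, hf⟩ := hPos.exists_forall_pos
  refine (hfin.subset hPos.subset).induction_on_lt_apply f
    (fun α hα ih => h α hα fun c hc γ hγ hmem => ih _ hmem ?_) hα
  rw [map_sub, map_smul, smul_eq_mul, sub_lt_self_iff]
  exact mul_pos hc (hf γ hγ)

theorem exists_list_simples_sum_eq (hPos : IsPositiveSystem Φ Pos) (hfin : Φ.Finite)
    (hα : α ∈ Pos) : ∃ l : List V, (∀ π ∈ l, π ∈ simples Pos) ∧ l.sum = α := by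
  refine hPos.induction_on_sub_smul hfin (fun α hα ih => ?_) hα
  by_cases hs : α ∈ simples Pos
  · exact ⟨[α], by simpa using hs, List.sum_singleton⟩
  obtain ⟨β, hβ, γ, hγ, rfl⟩ : ∃ β ∈ Pos, ∃ γ ∈ Pos, α = β + γ := by
    by_contra h
    exact hs ⟨hα, h⟩
  obtain ⟨lβ, hlβ, hβsum⟩ := ih 1 one_pos γ hγ (by simpa using hβ)
  obtain ⟨lγ, hlγ, hγsum⟩ := ih 1 one_pos β hβ (by simpa using hγ)
  refine ⟨lβ ++ lγ, fun π hπ => (List.mem_append.mp hπ).elim (hlβ π) (hlγ π), ?_⟩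
  rw [List.sum_append, hβsum, hγsum, one_smul, one_smul, add_sub_cancel_right,
    add_sub_cancel_left, add_comm]

theorem inner_nonpos_of_mem_simples (hPos : IsPositiveSystem Φ Pos) (hΦ : IsCrystRootSystem Φ)
    {π π' : V} (hπ : π ∈ simples Pos) (hπ' : π' ∈ simples Pos) (hne : π ≠ π') :
    ⟪π, π'⟫ ≤ 0 := by
  by_contra! h
  rcases hPos.mem_or_neg_mem hΦ (hΦ.sub_mem_of_inner_pos (hPos.subset hπ.1)
    (hPos.subset hπ'.1) h hne) with hs | hs
  · exact hπ.2 ⟨π - π', hs, π', hπ'.1, (sub_add_cancel π π').symm⟩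
  · exact hπ'.2 ⟨-(π - π'), hs, π, hπ.1, by abel⟩

theorem linearIndepOn_simples (hPos : IsPositiveSystem Φ Pos) (hΦ : IsCrystRootSystem Φ) :
    LinearIndepOn ℝ id (simples Pos) := by
  obtain ⟨f, hf⟩ := hPos.exists_forall_pos
  exact linearIndependent_of_inner_nonpos f (fun π => hf π π.2.1) fun π π' hne =>
    hPos.inner_nonpos_of_mem_simples hΦ π.2 π'.2 (Subtype.coe_ne_coe.mpr hne)

theorem exists_mem_simples_inner_pos (hPos : IsPositiveSystem Φ Pos) (hΦ : IsCrystRootSystem Φ)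
    (hα : α ∈ Pos) : ∃ π ∈ simples Pos, 0 < ⟪α, π⟫ := by
  obtain ⟨l, hl, hsum⟩ := hPos.exists_list_simples_sum_eq hΦ.finite hα
  have h : (l.map fun _ => (0 : ℝ)).sum < (l.map (⟪α, ·⟫)).sum := by
    rw [List.map_const', List.sum_replicate, smul_zero]
    change 0 < (l.map (innerₛₗ ℝ α)).sum
    rw [← map_list_sum, hsum]
    exact hΦ.inner_self_pos (hPos.subset hα)
  obtain ⟨π, hπ, hlt⟩ := List.exists_lt_of_sum_lt _ _ h
  exact ⟨π, hl π hπ, hlt⟩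

end IsPositiveSystem

section CoefficientSum

variable {Φ Pos L : Set V} {g : V →ₗ[ℝ] ℝ} {π β : V}

theorem apply_nonneg_of_mem_simples (hgL : ∀ π ∈ L, g π = 0)
    (hg : ∀ π ∈ simples Pos, π ∉ L → g π = 1) (hπ : π ∈ simples Pos) : 0 ≤ g π := by
  by_cases hπL : π ∈ L
  · exact (hgL π hπL).ge
  · exact (hg π hπ hπL).symm ▸ zero_le_one

theorem apply_nonneg_of_mem (hPos : IsPositiveSystem Φ Pos) (hfin : Φ.Finite)
    (hgL : ∀ π ∈ L, g π = 0) (hg : ∀ π ∈ simples Pos, π ∉ L → g π = 1) (hβ : β ∈ Pos) :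
    0 ≤ g β := by
  obtain ⟨l, hl, rfl⟩ := hPos.exists_list_simples_sum_eq hfin hβ
  rw [map_list_sum]
  exact List.sum_nonneg <| by simpa using fun π hπ => apply_nonneg_of_mem_simples hgL hg (hl π hπ)

theorem one_le_apply_of_notMem_span (hPos : IsPositiveSystem Φ Pos) (hfin : Φ.Finite)
    (hgL : ∀ π ∈ L, g π = 0) (hg : ∀ π ∈ simples Pos, π ∉ L → g π = 1) (hβ : β ∈ Pos)
    (hβL : β ∉ Submodule.span ℝ L) : 1 ≤ g β := by
  obtain ⟨l, hl, rfl⟩ := hPos.exists_list_simples_sum_eq hfin hβ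
  obtain ⟨π, hπ, hπL⟩ : ∃ π ∈ l, π ∉ L := by
    by_contra! h
    exact hβL (list_sum_mem fun π hπ => Submodule.subset_span (h π hπ))
  rw [map_list_sum, ← hg π (hl π hπ) hπL]
  refine List.single_le_sum ?_ _ (List.mem_map_of_mem hπ)
  simpa using fun π hπ => apply_nonneg_of_mem_simples hgL hg (hl π hπ)

theorem posLM_empty_subset (h0 : (0 : V) ∉ Φ) : posLM Φ Pos L ∅ ⊆ Pos := by
  rintro β (hβ | ⟨hβ, hβ0⟩)
  · exact hβ.1
  · rw [Submodule.span_empty, Submodule.bot_coe, Set.mem_singleton_iff] at hβ0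
    exact absurd (hβ0 ▸ hβ) h0

theorem mem_posLM_empty_iff (hΦ : IsCrystRootSystem Φ) (hPos : IsPositiveSystem Φ Pos)
    (hgL : ∀ π ∈ L, g π = 0) (hg : ∀ π ∈ simples Pos, π ∉ L → g π = 1) :
    β ∈ posLM Φ Pos L ∅ ↔ β ∈ Φ ∧ 1 ≤ g β := by
  have hker : Submodule.span ℝ L ≤ LinearMap.ker g := Submodule.span_le.mpr hgL
  simp only [posLM, subsys, Submodule.span_empty, Submodule.bot_coe, Set.mem_union,
    Set.mem_sdiff, Set.mem_inter_iff, Set.mem_singleton_iff, SetLike.mem_coe]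
  constructor
  · rintro (⟨hβ, hβL⟩ | ⟨hβ, rfl⟩)
    · exact ⟨hPos.subset hβ, one_le_apply_of_notMem_span hPos hΦ.finite hgL hg hβ
        fun h => hβL ⟨hPos.subset hβ, h⟩⟩
    · exact absurd hβ hΦ.nonzero
  · rintro ⟨hβ, h1⟩
    refine Or.inl ⟨(hPos.mem_or_neg_mem hΦ hβ).resolve_right fun hneg => ?_, fun h => ?_⟩
    · have := apply_nonneg_of_mem hPos hΦ.finite hgL hg hneg
      rw [map_neg] at this
      linarith
    · rw [LinearMap.mem_ker.mp (hker h.2)] at h1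
      exact absurd h1 (by norm_num)

theorem length_le_apply_sum (hΦ : IsCrystRootSystem Φ) (hPos : IsPositiveSystem Φ Pos)
    (hgL : ∀ π ∈ L, g π = 0) (hg : ∀ π ∈ simples Pos, π ∉ L → g π = 1) {l : List V}
    (hl : ∀ β ∈ l, β ∈ posLM Φ Pos L ∅) : (l.length : ℝ) ≤ g l.sum := by
  rw [map_list_sum]
  simpa using List.card_nsmul_le_sum (l.map g) 1 <| by
    simpa using fun β hβ => ((mem_posLM_empty_iff hΦ hPos hgL hg).mp (hl β hβ)).2

theorem rootReflection_mem_posLM (hΦ : IsCrystRootSystem Φ) (hPos : IsPositiveSystem Φ Pos)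
    (hgL : ∀ π ∈ L, g π = 0) (hg : ∀ π ∈ simples Pos, π ∉ L → g π = 1) (hπ : π ∈ Φ)
    (hπL : π ∈ L) (hβ : β ∈ posLM Φ Pos L ∅) : rootReflection π β ∈ posLM Φ Pos L ∅ := by
  rw [mem_posLM_empty_iff hΦ hPos hgL hg] at hβ ⊢
  exact ⟨hΦ.rootReflection_mem π hπ β hβ.1,
    (apply_rootReflection_of_apply_eq_zero g (hgL π hπL) β).symm ▸ hβ.2⟩

theorem exists_list_posLM_sum_eq (hΦ : IsCrystRootSystem Φ) (hPos : IsPositiveSystem Φ Pos)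
    (hgL : ∀ π ∈ L, g π = 0) (hg : ∀ π ∈ simples Pos, π ∉ L → g π = 1) {α : V}
    (hα : α ∈ Pos) : ∀ m : ℕ, 1 ≤ m → g α = m →
      ∃ l : List V, l.length = m ∧ (∀ β ∈ l, β ∈ posLM Φ Pos L ∅) ∧ l.sum = α := by
  have hmem : ∀ {β}, β ∈ posLM Φ Pos L ∅ ↔ β ∈ Φ ∧ 1 ≤ g β :=
    mem_posLM_empty_iff hΦ hPos hgL hg
  refine hPos.induction_on_sub_smul hΦ.finite (fun α hα ih => ?_) hα
  intro m hm hgα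
  have hαL : α ∈ posLM Φ Pos L ∅ := hmem.mpr ⟨hPos.subset hα, by rw [hgα]; exact_mod_cast hm⟩
  obtain rfl | hm2 := hm.eq_or_lt
  · exact ⟨[α], rfl, by simpa using hαL, List.sum_singleton⟩
  obtain ⟨π, hπ, hαπ⟩ := hPos.exists_mem_simples_inner_pos hΦ hα
  have hπΦ : π ∈ Φ := hPos.subset hπ.1
  by_cases hπL : π ∈ L
  · -- `s_π α = α - c • π` with `c > 0` still has `g`-value `m`; reflect its decomposition back.
    have hc : 0 < 2 * ⟪α, π⟫ / ⟪π, π⟫ := div_pos (mul_pos two_pos hαπ) (hΦ.inner_self_pos hπΦ)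
    have hsα := rootReflection_mem_posLM hΦ hPos hgL hg hπΦ hπL hαL
    rw [rootReflection_apply] at hsα
    obtain ⟨l, hlen, hl, hsum⟩ := ih _ hc π hπ.1 (posLM_empty_subset hΦ.nonzero hsα) m hm
      (by rw [← rootReflection_apply, apply_rootReflection_of_apply_eq_zero g (hgL π hπL), hgα])
    refine ⟨l.map (rootReflection π), by rw [List.length_map, hlen], ?_, ?_⟩
    · simpa using fun β hβ => rootReflection_mem_posLM hΦ hPos hgL hg hπΦ hπL (hl β hβ)
    · rw [← map_list_sum, hsum, ← rootReflection_apply, rootReflection_involutive (hΦ.ne_zero hπΦ)]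
  · have hgπ : g π = 1 := hg π hπ hπL
    have hm2' : (2 : ℝ) ≤ m := by exact_mod_cast hm2
    have hne : α ≠ π := by
      rintro rfl
      linarith
    have hsub : α - π ∈ posLM Φ Pos L ∅ := hmem.mpr
      ⟨hΦ.sub_mem_of_inner_pos (hPos.subset hα) hπΦ hαπ hne, by rw [map_sub, hgα, hgπ]; linarith⟩
    obtain ⟨l, hlen, hl, hsum⟩ := ih 1 one_pos π hπ.1
      (by rw [one_smul]; exact posLM_empty_subset hΦ.nonzero hsub) (m - 1) (by omega)
      (by rw [one_smul, map_sub, hgα, hgπ, Nat.cast_sub hm, Nat.cast_one])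
    refine ⟨π :: l, by rw [List.length_cons, hlen]; omega, ?_, ?_⟩
    · rintro β (_ | ⟨_, hβ⟩)
      exacts [hmem.mpr ⟨hπΦ, hgπ.ge⟩, hl β hβ]
    · rw [List.sum_cons, hsum, one_smul, add_sub_cancel]

end CoefficientSum

end AffineBiclosed

open AffineBiclosed Classical in
/-- Let `Φ` be an irreducible crystallographic root system with positive system `Φ⁺` and
simple system `Π`, and `L ⊊ Π`. Then `d_L(α) = h_L(α)` for every `α ∈ Φ⁺`, where `h_L(α)`
is the sum of the coefficients outside `L` in the expansion `α = Σ_{π ∈ Π} k_π π`. -/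
theorem dL_eq_hL
    {V : Type*} [NormedAddCommGroup V] [InnerProductSpace ℝ V]
    {Φ Pos : Set V} (hΦ : IsIrrCrystRootSystem Φ) (hPos : IsPositiveSystem Φ Pos)
    {L : Set V} (hL : L ⊂ simples Pos)
    {α : V} (hα : α ∈ Pos) (k : V →₀ ℕ) (hsupp : ↑k.support ⊆ simples Pos)
    (hsum : (k.sum fun π n => n • π) = α) :
    dL Φ Pos L α = k.sum fun π n => if π ∈ L then 0 else n := by
  have hΦ := hΦ.isCrystRootSystem
  obtain ⟨g, hg⟩ := exists_linearMap_eq_on (hPos.linearIndepOn_simples hΦ)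
    fun π => if π ∈ L then 0 else 1
  have hgL : ∀ π ∈ L, g π = 0 := fun π hπ => by rw [hg π (hL.subset hπ), if_pos hπ]
  have hg1 : ∀ π ∈ simples Pos, π ∉ L → g π = 1 := fun π hπ hπL => by rw [hg π hπ, if_neg hπL]
  set m := k.sum fun π n => if π ∈ L then 0 else n
  have hgα : g α = m := by
    simp only [← hsum, m, Finsupp.sum, map_sum, Nat.cast_sum]
    refine Finset.sum_congr rfl fun π hπ => ?_
    rw [map_nsmul, hg π (hsupp hπ)]
    split_ifs <;> simp
  have hmem : α ∈ posLM Φ Pos L ∅ ↔ 1 ≤ m := by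
    rw [mem_posLM_empty_iff hΦ hPos hgL hg1, hgα]
    exact (and_iff_right (hPos.subset hα)).trans Nat.one_le_cast
  unfold dL
  split_ifs with hαL
  · refine IsGreatest.csSup_eq ⟨exists_list_posLM_sum_eq hΦ hPos hgL hg1 hα m (hmem.mp hαL) hgα, ?_⟩
    rintro n ⟨l, rfl, hl, rfl⟩
    exact_mod_cast hgα ▸ length_le_apply_sum hΦ hPos hgL hg1 hl
  · exact (Nat.lt_one_iff.mp (not_le.mp (hmem.not.mp hαL))).symm
end

section
/- Let C be a closed subset of the affine positive system Φ̃⁺ and α ∈ Φ. If there exist m, n ∈ ℤ_{≥1} with α + nδ ∈ C and −α + mδ ∈ C, then C is infinite. -/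
open scoped RealInnerProductSpace

namespace AffineBiclosed

/-- Closedness applied to `(t + 1) • a + t • b` puts the whole ray `a + t • (a + b)` into `C`. -/
theorem IsClosedIn.infinite_of_forall_ray_mem {E : Type*} [AddCommGroup E] [Module ℝ E]
    {T C : Set E} (hC : IsClosedIn T C) {a b : E} (ha : a ∈ C) (hb : b ∈ C)
    (hab : a + b ≠ 0) (hT : ∀ t : ℕ, a + (t : ℝ) • (a + b) ∈ T) : C.Infinite := by
  refine Set.infinite_of_injective_forall_mem (f := fun t : ℕ => a + (t : ℝ) • (a + b))
    (fun s t hst => Nat.cast_injective (smul_left_injective ℝ hab (add_left_cancel hst)))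
    fun t => ?_
  have hray : a + (t : ℝ) • (a + b) = ((t : ℝ) + 1) • a + (t : ℝ) • b := by module
  have hT' := hT t
  rw [hray] at hT' ⊢
  exact hC.2 a ha b hb _ _ (by positivity) (by positivity) hT'

theorem mk_natCast_mem_hat {V : Type*} [NormedAddCommGroup V] [InnerProductSpace ℝ V]
    {Φ Pos : Set V} {α : V} (hα : α ∈ Φ) {k : ℕ} (hk : 1 ≤ k) :
    ((α, (k : ℝ)) : V × ℝ) ∈ hat Pos Φ := by
  refine ⟨α, hα, ?_⟩
  by_cases hp : α ∈ Pos
  · exact ⟨k, rfl, Or.inl ⟨hp, rfl⟩⟩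
  · exact ⟨k - 1, rfl, Or.inr ⟨hp, by rw [Nat.cast_sub hk, Nat.cast_one, sub_add_cancel]⟩⟩

end AffineBiclosed

open AffineBiclosed in
theorem closed_set_with_opposite_roots_infinite_general
    {V : Type*} [NormedAddCommGroup V] [InnerProductSpace ℝ V]
    {Φ Pos : Set V}
    {C : Set (V × ℝ)} (hC : IsClosedIn (hat Pos Φ) C)
    {α : V} (hα : α ∈ Φ) {m n : ℕ} (hn : 1 ≤ n)
    (h₁ : ((α, (n : ℝ)) : V × ℝ) ∈ C) (h₂ : ((-α, (m : ℝ)) : V × ℝ) ∈ C) :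
    C.Infinite := by
  refine hC.infinite_of_forall_ray_mem h₁ h₂ ?_ fun t => ?_
  · simp only [Prod.mk_add_mk, add_neg_cancel, ne_eq, Prod.mk_eq_zero, true_and]
    positivity
  · have hray : ((α, (n : ℝ)) : V × ℝ) + (t : ℝ) • ((α, (n : ℝ)) + (-α, (m : ℝ)))
        = (α, ((n + t * (n + m) : ℕ) : ℝ)) := by
      ext <;> simp
    rw [hray]
    exact mk_natCast_mem_hat hα (by omega)

open AffineBiclosed in
/-- Let `C` be a closed subset of the affine positive system `Φ̃⁺` and `α ∈ Φ`. If there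
exist `m, n ∈ ℤ_{≥1}` with `α + nδ ∈ C` and `−α + mδ ∈ C`, then `C` is infinite. -/
theorem closed_set_with_opposite_roots_infinite
    {V : Type*} [NormedAddCommGroup V] [InnerProductSpace ℝ V]
    {Φ Pos : Set V} (hΦ : IsIrrCrystRootSystem Φ) (hPos : IsPositiveSystem Φ Pos)
    {C : Set (V × ℝ)} (hC : IsClosedIn (hat Pos Φ) C)
    {α : V} (hα : α ∈ Φ) {m n : ℕ} (hm : 1 ≤ m) (hn : 1 ≤ n)
    (h₁ : ((α, (n : ℝ)) : V × ℝ) ∈ C) (h₂ : ((-α, (m : ℝ)) : V × ℝ) ∈ C) :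
    C.Infinite :=
  closed_set_with_opposite_roots_infinite_general hC hα hn h₁ h₂
end
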